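/- arXiv:1910.06287 — 3 statements merged into one kernel-verified Lean document; each statement's English description precedes it below -/
import Mathlib

section
/- Let $G$ be an $(n,d,\lambda)$-graph and let $t$ be a positive integer with $t \ge \frac{2n (\log n)^2}{d}$. Then the number of ordered $t$-tuples $(v_1,\ldots,v_t) \in V(G)^t$ of vertices of $G$ such that no two of the $v_i$ are adjacent in $G$ is at most $\left(\frac{4 e n \lambda}{d}\right)^t$. -/
/-!
Everything happens inside connected components. On a component `C` of the `d`-regular graph the
eigenvalue `d` only carries the constant vector, so the spectral bound gives an expander mixing
lemma for subsets of `C`: `e(Z, Y) ≥ d |Z| |Y| / |C| - λ √(|Z| |Y|)`. Call `v ∈ Y` exceptional if it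
has fewer than `d |Y ∩ C_v| / (2 |C_v|)` neighbours in `Y`; by mixing there are at most `2λn/d`
exceptional vertices. For the potential `Φ(Y) = (2/d) ∑_v log |Y ∩ C_v|`, deleting the neighbourhood
of a non-exceptional vertex shrinks `Y ∩ C_v` by the factor `1 - d / (2 |C_v|)` and hence lowers `Φ`
by at least `1`. Choosing the first entry of a tuple and recursing on the non-neighbours gives
`N_t(Y) ≤ n ^ Φ(Y) (2λn/d + 1) ^ t`, and `n ^ Φ(V) ≤ exp (2n (log n)² / d) ≤ e ^ t`. Finally, mixing
for a single vertex shows `λ ≥ d / n`, so `2λn/d + 1 ≤ 4λn/d`.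
-/

open scoped Classical

/-- An `(n, d, λ)`-graph: a `d`-regular simple graph on `n` vertices such that every
eigenvalue of its adjacency matrix other than the trivial eigenvalue `d` has absolute
value at most `λ`. -/
def IsNDLGraph {V : Type*} [Fintype V] (G : SimpleGraph V) (n d : ℕ) (lam : ℝ) : Prop :=
  Fintype.card V = n ∧ (∀ v : V, Nat.card (G.neighborSet v) = d) ∧
    ∀ μ ∈ spectrum ℝ (SimpleGraph.adjMatrix ℝ G), μ ≠ (d : ℝ) → |μ| ≤ lam

theorem IsNDLGraph.isRegularOfDegree {V : Type*} [Fintype V] {G : SimpleGraph V} {n d : ℕ}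
    {lam : ℝ} (hG : IsNDLGraph G n d lam) : G.IsRegularOfDegree d := fun v => by
  rw [← G.card_neighborSet_eq_degree, ← Nat.card_eq_fintype_card, hG.2.1 v]

open Matrix Finset

namespace Matrix.IsHermitian

variable {ι : Type*} [Fintype ι] [DecidableEq ι] {A : Matrix ι ι ℝ}

theorem sum_dotProduct_eigenvectorBasis (hA : A.IsHermitian) (x y : ι → ℝ) :
    ∑ i, (x ⬝ᵥ hA.eigenvectorBasis i) * (hA.eigenvectorBasis i ⬝ᵥ y) = x ⬝ᵥ y := by
  have := hA.eigenvectorBasis.sum_inner_mul_inner (WithLp.toLp 2 x) (WithLp.toLp 2 y)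
  simpa [EuclideanSpace.inner_eq_star_dotProduct, dotProduct_comm] using this

theorem dotProduct_mulVec_eq_sum_eigenvalues (hA : A.IsHermitian) (x y : ι → ℝ) :
    x ⬝ᵥ (A *ᵥ y) = ∑ i, hA.eigenvalues i *
      ((x ⬝ᵥ hA.eigenvectorBasis i) * (y ⬝ᵥ hA.eigenvectorBasis i)) := by
  rw [← hA.sum_dotProduct_eigenvectorBasis]
  refine Finset.sum_congr rfl fun i _ => ?_
  have hsymm : (hA.eigenvectorBasis i : ι → ℝ) ⬝ᵥ (A *ᵥ y) =
      (A *ᵥ hA.eigenvectorBasis i) ⬝ᵥ y := by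
    rw [dotProduct_mulVec, ← mulVec_transpose, (isHermitian_iff_isSymm.1 hA).eq]
  rw [hsymm, hA.mulVec_eigenvectorBasis, smul_dotProduct, smul_eq_mul, dotProduct_comm y]
  ring

theorem sum_sq_dotProduct_eigenvectorBasis (hA : A.IsHermitian) (x : ι → ℝ) :
    ∑ i, |x ⬝ᵥ hA.eigenvectorBasis i| ^ 2 = x ⬝ᵥ x := by
  simp_rw [sq_abs, sq, ← hA.sum_dotProduct_eigenvectorBasis x x, dotProduct_comm x]

theorem abs_dotProduct_mulVec_le (hA : A.IsHermitian) {d lam : ℝ} (hlam : 0 ≤ lam)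
    (hspec : ∀ μ ∈ spectrum ℝ A, μ ≠ d → |μ| ≤ lam) {x : ι → ℝ}
    (hx : ∀ w, A *ᵥ w = d • w → x ⬝ᵥ w = 0) (y : ι → ℝ) :
    |x ⬝ᵥ (A *ᵥ y)| ≤ lam * √(x ⬝ᵥ x) * √(y ⬝ᵥ y) := by
  set p := fun i => x ⬝ᵥ hA.eigenvectorBasis i
  set q := fun i => y ⬝ᵥ hA.eigenvectorBasis i
  have hterm : ∀ i, |hA.eigenvalues i * (p i * q i)| ≤ lam * (|p i| * |q i|) := by
    intro i
    by_cases hd : hA.eigenvalues i = d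
    · have hp : p i = 0 := hx _ (hd ▸ hA.mulVec_eigenvectorBasis i)
      simp [hp]
    · rw [abs_mul, abs_mul]
      gcongr
      exact hspec _ (hA.eigenvalues_mem_spectrum_real i) hd
  calc |x ⬝ᵥ (A *ᵥ y)| = |∑ i, hA.eigenvalues i * (p i * q i)| := by
        rw [hA.dotProduct_mulVec_eq_sum_eigenvalues]
    _ ≤ ∑ i, lam * (|p i| * |q i|) := (abs_sum_le_sum_abs _ _).trans (sum_le_sum fun i _ => hterm i)
    _ = lam * ∑ i, |p i| * |q i| := by rw [mul_sum]
    _ ≤ lam * (√(∑ i, |p i| ^ 2) * √(∑ i, |q i| ^ 2)) := by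
        gcongr; exact Real.sum_mul_le_sqrt_mul_sqrt _ _ _
    _ = lam * √(x ⬝ᵥ x) * √(y ⬝ᵥ y) := by
        rw [hA.sum_sq_dotProduct_eigenvectorBasis, hA.sum_sq_dotProduct_eigenvectorBasis, mul_assoc]

end Matrix.IsHermitian

namespace AlonRodl

theorem log_natCast_le_log_natCast {a b : ℕ} (h : a ≤ b) : Real.log a ≤ Real.log b := by
  rcases a.eq_zero_or_pos with rfl | ha
  · simpa using Real.log_natCast_nonneg b
  · exact Real.log_le_log (by exact_mod_cast ha) (by exact_mod_cast h)

theorem sum_le_card_mul_add_card_mul {ι : Type*} {s E : Finset ι} {f : ι → ℝ} {B C : ℝ}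
    (hB : 0 ≤ B) (hC : 0 ≤ C) (hfE : ∀ i ∈ E, f i ≤ B) (hf : ∀ i ∈ s, i ∉ E → f i ≤ C) :
    ∑ i ∈ s, f i ≤ #E * B + #s * C := by
  rw [← sum_filter_add_sum_filter_not s (fun i => i ∈ E) f]
  gcongr
  · refine (sum_le_card_nsmul _ _ B fun i hi => hfE i (mem_filter.1 hi).2).trans ?_
    rw [nsmul_eq_mul]
    gcongr
    intro i hi
    exact (mem_filter.1 hi).2
  · refine (sum_le_card_nsmul _ _ C fun i hi =>
      hf i (mem_filter.1 hi).1 (mem_filter.1 hi).2).trans ?_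
    rw [nsmul_eq_mul]
    gcongr
    exact filter_subset _ _

variable {V : Type*}

theorem card_interedges_eq_sum (G : SimpleGraph V) (Z Y : Finset V) :
    #(G.interedges Z Y) = ∑ u ∈ Z, #{w ∈ Y | G.Adj u w} := by
  simp_rw [SimpleGraph.interedges_def, card_filter, sum_product]

variable [Fintype V] (G : SimpleGraph V)

noncomputable def component (v : V) : Finset V := {u | G.Reachable v u}

variable {G}

theorem mem_component {u v : V} : u ∈ component G v ↔ G.Reachable v u := by
  simp [component]

theorem mem_component_self (v : V) : v ∈ component G v :=
  mem_component.2 .rfl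

theorem mem_component_comm {u v : V} : u ∈ component G v ↔ v ∈ component G u := by
  simp only [mem_component, SimpleGraph.reachable_comm]

theorem component_eq_of_mem {u v : V} (h : u ∈ component G v) : component G u = component G v := by
  ext w
  simp only [mem_component] at *
  exact ⟨h.trans, h.symm.trans⟩

theorem mem_component_of_adj {u v w : V} (h : u ∈ component G v) (ha : G.Adj u w) :
    w ∈ component G v :=
  mem_component.2 ((mem_component.1 h).trans ha.reachable)

theorem card_component_pos (v : V) : 0 < #(component G v) :=
  card_pos.2 ⟨v, mem_component_self v⟩

theorem degree_lt_card_component (v : V) : G.degree v < #(component G v) := by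
  rw [← SimpleGraph.card_neighborFinset_eq_degree, Nat.lt_iff_add_one_le,
    ← card_insert_of_notMem (G.notMem_neighborFinset_self v)]
  refine card_le_card (insert_subset (mem_component_self v) fun u hu => ?_)
  exact mem_component_of_adj (mem_component_self v) ((G.mem_neighborFinset v u).1 hu)

theorem sum_card_inter_component_div (S : Finset V) :
    ∑ v, (#(S ∩ component G v) : ℝ) / #(component G v) = #S := by
  have hfiber : ∀ u : V, ∑ v ∈ component G u, (1 : ℝ) / #(component G v) = 1 := by
    intro u
    rw [sum_congr rfl fun v hv => by rw [component_eq_of_mem hv], sum_const, nsmul_eq_mul]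
    have := (card_component_pos (G := G) u).ne'
    field_simp
  calc ∑ v, (#(S ∩ component G v) : ℝ) / #(component G v)
      = ∑ v, ∑ u ∈ S, if u ∈ component G v then (1 : ℝ) / #(component G v) else 0 := by
        refine sum_congr rfl fun v _ => ?_
        rw [sum_ite_mem, sum_const, nsmul_eq_mul, mul_one_div]
    _ = ∑ u ∈ S, ∑ v ∈ component G u, (1 : ℝ) / #(component G v) := by
        rw [sum_comm]
        simp_rw [mem_component_comm, ← sum_filter, filter_mem_eq_inter, univ_inter]
    _ = #S := by simp only [hfiber, sum_const, nsmul_eq_mul, mul_one]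

section Mixing

variable {d : ℕ}

theorem apply_eq_of_reachable (hreg : G.IsRegularOfDegree d) {w : V → ℝ}
    (hw : G.adjMatrix ℝ *ᵥ w = (d : ℝ) • w) {u v : V} (h : G.Reachable u v) : w u = w v := by
  refine (SimpleGraph.lapMatrix_mulVec_eq_zero_iff_forall_reachable G).1 ?_ u v h
  ext x
  simp [SimpleGraph.lapMatrix, sub_mulVec, hw, SimpleGraph.degMatrix_mulVec_apply, hreg.degree_eq]

noncomputable def indVec (S : Finset V) : V → ℝ := fun v => if v ∈ S then 1 else 0

theorem indVec_dotProduct (S : Finset V) (w : V → ℝ) : indVec S ⬝ᵥ w = ∑ u ∈ S, w u := by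
  simp [indVec, dotProduct, ite_mul, sum_ite_mem]

theorem indVec_dotProduct_indVec (S T : Finset V) : indVec S ⬝ᵥ indVec T = #(S ∩ T) := by
  rw [indVec_dotProduct]
  simp [indVec, sum_ite_mem]

theorem adjMatrix_mulVec_indVec (S : Finset V) (u : V) :
    (G.adjMatrix ℝ *ᵥ indVec S) u = #{w ∈ S | G.Adj u w} := by
  rw [SimpleGraph.adjMatrix_mulVec_apply, ← indVec_dotProduct, indVec_dotProduct_indVec]
  congr 2
  ext w
  simp [and_comm]

theorem card_interedges_eq_dotProduct (Z Y : Finset V) :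
    (#(G.interedges Z Y) : ℝ) = indVec Z ⬝ᵥ (G.adjMatrix ℝ *ᵥ indVec Y) := by
  simp_rw [indVec_dotProduct, adjMatrix_mulVec_indVec, card_interedges_eq_sum, Nat.cast_sum]

theorem adjMatrix_mulVec_indVec_component (hreg : G.IsRegularOfDegree d) (v : V) :
    G.adjMatrix ℝ *ᵥ indVec (component G v) = (d : ℝ) • indVec (component G v) := by
  ext u
  rw [adjMatrix_mulVec_indVec]
  by_cases hu : u ∈ component G v
  · have : {w ∈ component G v | G.Adj u w} = G.neighborFinset u := by
      ext w
      simpa using fun h => mem_component_of_adj hu h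
    simp [this, indVec, hu, hreg.degree_eq]
  · have : {w ∈ component G v | G.Adj u w} = ∅ := by
      ext w
      simpa using fun hw ha => hu (mem_component_of_adj hw ha.symm)
    simp [this, indVec, hu]

variable (G) in
noncomputable def centered (v : V) (S : Finset V) : V → ℝ :=
  indVec S - ((#S : ℝ) / #(component G v)) • indVec (component G v)

theorem centered_dotProduct_eq_zero (hreg : G.IsRegularOfDegree d) {v : V} {S : Finset V}
    (hS : S ⊆ component G v) {w : V → ℝ} (hw : G.adjMatrix ℝ *ᵥ w = (d : ℝ) • w) :
    centered G v S ⬝ᵥ w = 0 := by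
  have hsum : ∀ T ⊆ component G v, ∑ u ∈ T, w u = #T * w v := fun T hT => by
    rw [sum_congr rfl fun u hu => apply_eq_of_reachable hreg hw (mem_component.1 (hT hu)).symm,
      sum_const, nsmul_eq_mul]
  have hK : (#(component G v) : ℝ) ≠ 0 := by exact_mod_cast (card_component_pos v).ne'
  rw [centered, sub_dotProduct, smul_dotProduct, indVec_dotProduct, indVec_dotProduct, hsum S hS,
    hsum _ subset_rfl, smul_eq_mul]
  field_simp
  ring

theorem centered_dotProduct_self_le {v : V} {S : Finset V} (hS : S ⊆ component G v) :
    centered G v S ⬝ᵥ centered G v S ≤ #S := by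
  have hK : (0 : ℝ) < #(component G v) := by exact_mod_cast card_component_pos v
  have hexpand : centered G v S ⬝ᵥ centered G v S = #S - (#S : ℝ) ^ 2 / #(component G v) := by
    simp only [centered, sub_dotProduct, dotProduct_sub, smul_dotProduct, dotProduct_smul,
      indVec_dotProduct_indVec, inter_eq_left.2 hS, inter_eq_right.2 hS, inter_self, smul_eq_mul]
    field_simp
    ring
  rw [hexpand]
  linarith [div_nonneg (sq_nonneg (#S : ℝ)) hK.le]

theorem card_interedges_eq_centered (hreg : G.IsRegularOfDegree d) {v : V} {Z Y : Finset V}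
    (hZ : Z ⊆ component G v) (hY : Y ⊆ component G v) :
    (#(G.interedges Z Y) : ℝ) = centered G v Z ⬝ᵥ (G.adjMatrix ℝ *ᵥ centered G v Y)
      + d * #Z * #Y / #(component G v) := by
  set A := G.adjMatrix ℝ
  set k := indVec (component G v)
  have hAk : A *ᵥ k = (d : ℝ) • k := adjMatrix_mulVec_indVec_component hreg v
  have hZk : centered G v Z ⬝ᵥ k = 0 := centered_dotProduct_eq_zero hreg hZ hAk
  have hkY : k ⬝ᵥ (A *ᵥ centered G v Y) = 0 := by
    rw [← dotProduct_transpose_mulVec, SimpleGraph.transpose_adjMatrix, hAk, dotProduct_smul,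
      centered_dotProduct_eq_zero hreg hY hAk, smul_zero]
  have hkk : k ⬝ᵥ k = #(component G v) := by rw [indVec_dotProduct_indVec, inter_self]
  have hK : (#(component G v) : ℝ) ≠ 0 := by exact_mod_cast (card_component_pos v).ne'
  have hind : ∀ S : Finset V, indVec S = centered G v S + ((#S : ℝ) / #(component G v)) • k :=
    fun S => (sub_add_cancel _ _).symm
  rw [card_interedges_eq_dotProduct, hind Z, hind Y, mulVec_add, mulVec_smul, hAk, add_dotProduct,
    dotProduct_add, dotProduct_add, smul_dotProduct, smul_dotProduct, dotProduct_smul,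
    dotProduct_smul, hZk, hkY]
  simp only [dotProduct_smul, hkk, smul_eq_mul]
  field_simp
  ring

theorem sub_le_card_interedges (hreg : G.IsRegularOfDegree d) {lam : ℝ} (hlam : 0 ≤ lam)
    (hspec : ∀ μ ∈ spectrum ℝ (G.adjMatrix ℝ), μ ≠ d → |μ| ≤ lam) {v : V} {Z Y : Finset V}
    (hZ : Z ⊆ component G v) (hY : Y ⊆ component G v) :
    d * #Z * #Y / #(component G v) - lam * √(#Z : ℝ) * √(#Y : ℝ) ≤ #(G.interedges Z Y) := by
  have hmix := (G.isHermitian_adjMatrix ℝ).abs_dotProduct_mulVec_le hlam hspec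
    (fun _ hw => centered_dotProduct_eq_zero hreg hZ hw) (centered G v Y)
  have hnorms : lam * √(centered G v Z ⬝ᵥ centered G v Z) * √(centered G v Y ⬝ᵥ centered G v Y)
      ≤ lam * √(#Z : ℝ) * √(#Y : ℝ) := by
    gcongr
    exacts [centered_dotProduct_self_le hZ, centered_dotProduct_self_le hY]
  rw [card_interedges_eq_centered hreg hZ hY]
  linarith [neg_abs_le (centered G v Z ⬝ᵥ (G.adjMatrix ℝ *ᵥ centered G v Y))]

theorem div_card_component_le (hreg : G.IsRegularOfDegree d) (hd : 0 < d) {lam : ℝ}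
    (hspec : ∀ μ ∈ spectrum ℝ (G.adjMatrix ℝ), μ ≠ d → |μ| ≤ lam) (v : V) :
    d / #(component G v) ≤ lam := by
  have hv : {v} ⊆ component G v := singleton_subset_iff.2 (mem_component_self v)
  -- mixing for `Z = Y = {v}`, which spans no edge; it needs a nonnegative bound, hence `max lam 0`
  have h := sub_le_card_interedges hreg (le_max_right lam 0)
    (fun μ hμ hne => (hspec μ hμ hne).trans (le_max_left _ _)) hv hv
  have hpos : (0 : ℝ) < d / #(component G v) := by
    have := card_component_pos (G := G) v
    positivity
  have hempty : G.interedges {v} {v} = ∅ := by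
    ext ⟨a, b⟩
    simp only [SimpleGraph.mem_interedges_iff, mem_singleton, notMem_empty, iff_false]
    rintro ⟨rfl, rfl, hab⟩
    exact G.irrefl hab
  simp only [hempty, card_empty, card_singleton, Nat.cast_zero, Nat.cast_one, mul_one,
    Real.sqrt_one, sub_nonpos] at h
  rcases le_total 0 lam with hlam | hlam
  · rwa [max_eq_left hlam] at h
  · rw [max_eq_right hlam] at h
    linarith

theorem natCast_le_mul_card [Nonempty V] (hreg : G.IsRegularOfDegree d) (hd : 0 < d) {lam : ℝ}
    (hspec : ∀ μ ∈ spectrum ℝ (G.adjMatrix ℝ), μ ≠ d → |μ| ≤ lam) :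
    (d : ℝ) ≤ lam * Fintype.card V := by
  let v := Classical.arbitrary V
  have hk : (0 : ℝ) < #(component G v) := by exact_mod_cast card_component_pos v
  have hdk := div_card_component_le hreg hd hspec v
  calc (d : ℝ) = d / #(component G v) * #(component G v) := by field_simp
    _ ≤ lam * Fintype.card V :=
      mul_le_mul hdk (by exact_mod_cast card_le_univ _) hk.le (le_trans (by positivity) hdk)

variable (G d) in
noncomputable def exceptional (Y : Finset V) : Finset V :=
  {v ∈ Y | (#{w ∈ Y | G.Adj v w} : ℝ) < d * #(Y ∩ component G v) / (2 * #(component G v))}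

theorem card_exceptional_inter_component_le (hreg : G.IsRegularOfDegree d) {lam : ℝ}
    (hlam : 0 ≤ lam) (hspec : ∀ μ ∈ spectrum ℝ (G.adjMatrix ℝ), μ ≠ d → |μ| ≤ lam)
    (Y : Finset V) (v : V) :
    d * #(exceptional G d Y ∩ component G v) ≤ 2 * lam * #(component G v) := by
  set Z := exceptional G d Y ∩ component G v
  set Yv := Y ∩ component G v
  have hZY : Z ⊆ Yv := inter_subset_inter (filter_subset _ _) subset_rfl
  have hk : (0 : ℝ) < #(component G v) := by exact_mod_cast card_component_pos v
  have hupper : (#(G.interedges Z Yv) : ℝ) ≤ #Z * (d * #Yv / (2 * #(component G v))) := by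
    rw [card_interedges_eq_sum, Nat.cast_sum, ← nsmul_eq_mul, ← sum_const]
    refine sum_le_sum fun u hu => ?_
    obtain ⟨huEx, huK⟩ := mem_inter.1 hu
    have hlow := (mem_filter.1 huEx).2
    rw [component_eq_of_mem huK] at hlow
    refine le_trans ?_ hlow.le
    exact_mod_cast card_le_card (filter_subset_filter _ inter_subset_left)
  have hmix := sub_le_card_interedges hreg hlam hspec inter_subset_right inter_subset_right
    (Z := Z) (Y := Yv)
  have hsqrt : √(#Z : ℝ) * √(#Yv : ℝ) ≤ #Yv := by
    calc √(#Z : ℝ) * √(#Yv : ℝ) ≤ √(#Yv : ℝ) * √(#Yv : ℝ) := by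
          gcongr
      _ = #Yv := Real.mul_self_sqrt (Nat.cast_nonneg _)
  have hhalf : (#Z : ℝ) * (d * #Yv / (2 * #(component G v)))
      = d * #Z * #Yv / #(component G v) / 2 := by ring
  have hkey : d * #Z * #Yv / #(component G v) ≤ 2 * lam * #Yv := by
    linarith [mul_le_mul_of_nonneg_left hsqrt hlam]
  rw [div_le_iff₀ hk] at hkey
  rcases Yv.eq_empty_or_nonempty with hY | hY
  · rw [subset_empty.1 (hY ▸ hZY : Z ⊆ ∅), card_empty, Nat.cast_zero, mul_zero]
    positivity
  · exact le_of_mul_le_mul_right (by linarith) (by exact_mod_cast hY.card_pos : (0 : ℝ) < #Yv)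

theorem card_exceptional_le (hreg : G.IsRegularOfDegree d) (hd : 0 < d) {lam : ℝ}
    (hlam : 0 ≤ lam) (hspec : ∀ μ ∈ spectrum ℝ (G.adjMatrix ℝ), μ ≠ d → |μ| ≤ lam)
    (Y : Finset V) : (#(exceptional G d Y) : ℝ) ≤ 2 * lam * Fintype.card V / d := by
  have hd' : (0 : ℝ) < d := by exact_mod_cast hd
  calc (#(exceptional G d Y) : ℝ)
      = ∑ v, (#(exceptional G d Y ∩ component G v) : ℝ) / #(component G v) :=
        (sum_card_inter_component_div _).symm
    _ ≤ ∑ _v : V, 2 * lam / d := sum_le_sum fun v _ => by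
        have hk : (0 : ℝ) < #(component G v) := by exact_mod_cast card_component_pos v
        rw [div_le_div_iff₀ hk hd']
        linarith [card_exceptional_inter_component_le hreg hlam hspec Y v]
    _ = 2 * lam * Fintype.card V / d := by
        rw [sum_const, card_univ, nsmul_eq_mul]
        ring

end Mixing

section Potential

variable {d : ℕ}

variable (G d) in
/-- As `Real.log 0 = 0`, components disjoint from `Y` contribute nothing. -/
noncomputable def potential (Y : Finset V) : ℝ :=
  2 / d * ∑ v, Real.log #(Y ∩ component G v)

theorem potential_nonneg (Y : Finset V) : 0 ≤ potential G d Y :=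
  mul_nonneg (by positivity) (sum_nonneg fun _ _ => Real.log_natCast_nonneg _)

theorem potential_mono {Y' Y : Finset V} (h : Y' ⊆ Y) : potential G d Y' ≤ potential G d Y := by
  refine mul_le_mul_of_nonneg_left (sum_le_sum fun v _ => ?_) (by positivity)
  exact log_natCast_le_log_natCast (card_le_card (inter_subset_inter h subset_rfl))

theorem potential_univ_le :
    potential G d univ ≤ 2 * (Fintype.card V : ℝ) * Real.log (Fintype.card V) / d := by
  calc potential G d univ ≤ 2 / d * ∑ _v : V, Real.log (Fintype.card V) :=
        mul_le_mul_of_nonneg_left (sum_le_sum fun v _ =>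
          log_natCast_le_log_natCast (card_le_univ _)) (by positivity)
    _ = 2 * Fintype.card V * Real.log (Fintype.card V) / d := by
        rw [sum_const, card_univ, nsmul_eq_mul]
        ring

theorem card_filter_not_adj_inter_component_add_le (Y : Finset V) (v : V) :
    #({w ∈ Y | ¬G.Adj v w} ∩ component G v) + #{w ∈ Y | G.Adj v w} ≤ #(Y ∩ component G v) := by
  rw [← card_union_of_disjoint]
  · refine card_le_card (union_subset (inter_subset_inter (filter_subset _ _) subset_rfl) ?_)
    intro w hw
    obtain ⟨hwY, hvw⟩ := mem_filter.1 hw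
    exact mem_inter.2 ⟨hwY, mem_component_of_adj (mem_component_self v) hvw⟩
  · exact disjoint_left.2 fun w hw hw' =>
      (mem_filter.1 (mem_inter.1 hw).1).2 (mem_filter.1 hw').2

theorem log_card_filter_not_adj_inter_component_le (hreg : G.IsRegularOfDegree d)
    {Y : Finset V} {v : V} (hvY : v ∈ Y) (hv : v ∉ exceptional G d Y) :
    Real.log #({w ∈ Y | ¬G.Adj v w} ∩ component G v)
      ≤ Real.log #(Y ∩ component G v) - d / (2 * #(component G v)) := by
  have hdk : (d : ℝ) < #(component G v) := by
    exact_mod_cast hreg.degree_eq v ▸ degree_lt_card_component v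
  have hk : (0 : ℝ) < #(component G v) := by exact_mod_cast card_component_pos v
  have hYv : (0 : ℝ) < #(Y ∩ component G v) := by
    exact_mod_cast card_pos.2 ⟨v, mem_inter.2 ⟨hvY, mem_component_self v⟩⟩
  set k : ℝ := (#(component G v) : ℝ)
  have hshrink : 0 < 1 - d / (2 * k) := by
    rw [sub_pos, div_lt_one (by positivity)]
    linarith
  have hpos : (0 : ℝ) < #({w ∈ Y | ¬G.Adj v w} ∩ component G v) := by
    exact_mod_cast card_pos.2 ⟨v, mem_inter.2 ⟨mem_filter.2 ⟨hvY, G.irrefl⟩, mem_component_self v⟩⟩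
  have hdeg : d * #(Y ∩ component G v) / (2 * k) ≤ #{w ∈ Y | G.Adj v w} :=
    not_lt.1 fun h => hv (mem_filter.2 ⟨hvY, h⟩)
  have hcount : (#({w ∈ Y | ¬G.Adj v w} ∩ component G v) : ℝ)
      ≤ #(Y ∩ component G v) * (1 - d / (2 * k)) := by
    have hsplit : (#({w ∈ Y | ¬G.Adj v w} ∩ component G v) : ℝ) + #{w ∈ Y | G.Adj v w}
        ≤ #(Y ∩ component G v) := by
      exact_mod_cast card_filter_not_adj_inter_component_add_le Y v
    rw [mul_one_sub, ← mul_div_assoc, mul_comm _ (d : ℝ)]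
    linarith
  calc Real.log #({w ∈ Y | ¬G.Adj v w} ∩ component G v)
      ≤ Real.log (#(Y ∩ component G v) * (1 - d / (2 * k))) := Real.log_le_log hpos hcount
    _ = Real.log #(Y ∩ component G v) + Real.log (1 - d / (2 * k)) :=
        Real.log_mul hYv.ne' hshrink.ne'
    _ ≤ Real.log #(Y ∩ component G v) + ((1 - d / (2 * k)) - 1) := by
        gcongr; exact Real.log_le_sub_one_of_pos hshrink
    _ = Real.log #(Y ∩ component G v) - d / (2 * k) := by ring

theorem potential_filter_not_adj_le (hreg : G.IsRegularOfDegree d) (hd : 0 < d) {Y : Finset V}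
    {v : V} (hvY : v ∈ Y) (hv : v ∉ exceptional G d Y) :
    potential G d {w ∈ Y | ¬G.Adj v w} ≤ potential G d Y - 1 := by
  set Y' := {w ∈ Y | ¬G.Adj v w}
  set drop := fun u => Real.log #(Y ∩ component G u) - Real.log #(Y' ∩ component G u)
  have hdrop : ∀ u, 0 ≤ drop u := fun u => sub_nonneg.2 <|
    log_natCast_le_log_natCast (card_le_card (inter_subset_inter (filter_subset _ _) subset_rfl))
  have hdropK : ∀ u ∈ component G v, d / (2 * #(component G v)) ≤ drop u := fun u hu => by
    have := log_card_filter_not_adj_inter_component_le hreg hvY hv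
    simp only [drop, component_eq_of_mem hu]
    linarith
  have hk : (#(component G v) : ℝ) ≠ 0 := by exact_mod_cast (card_component_pos v).ne'
  have hsum : (d : ℝ) / 2 ≤ ∑ u, drop u :=
    calc (d : ℝ) / 2 = ∑ _u ∈ component G v, (d : ℝ) / (2 * #(component G v)) := by
          rw [sum_const, nsmul_eq_mul]
          field_simp
      _ ≤ ∑ u ∈ component G v, drop u := sum_le_sum hdropK
      _ ≤ ∑ u, drop u := sum_le_sum_of_subset_of_nonneg (subset_univ _) fun u _ _ => hdrop u
  have hd' : (d : ℝ) ≠ 0 := by exact_mod_cast hd.ne'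
  calc potential G d Y' = potential G d Y - 2 / d * ∑ u, drop u := by
        simp only [potential, drop, sum_sub_distrib]
        ring
    _ ≤ potential G d Y - 2 / d * (d / 2) := by gcongr
    _ = potential G d Y - 1 := by field_simp

variable (G d) in
theorem rpow_potential_univ_le_exp [Nonempty V] :
    (Fintype.card V : ℝ) ^ potential G d univ
      ≤ Real.exp (2 * Fintype.card V * Real.log (Fintype.card V) ^ 2 / d) := by
  have hn : (0 : ℝ) < Fintype.card V := by exact_mod_cast Fintype.card_pos
  rw [Real.rpow_def_of_pos hn, Real.exp_le_exp]
  calc Real.log (Fintype.card V) * potential G d univ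
      ≤ Real.log (Fintype.card V) * (2 * Fintype.card V * Real.log (Fintype.card V) / d) :=
        mul_le_mul_of_nonneg_left potential_univ_le (Real.log_natCast_nonneg _)
    _ = 2 * Fintype.card V * Real.log (Fintype.card V) ^ 2 / d := by ring

end Potential

section Counting

variable (G) in
noncomputable def indepTuples (Y : Finset V) (s : ℕ) : Finset (Fin s → V) :=
  {f | (∀ i, f i ∈ Y) ∧ Pairwise fun i j => ¬G.Adj (f i) (f j)}

theorem card_indepTuples_zero (Y : Finset V) : #(indepTuples G Y 0) = 1 := by
  rw [indepTuples, filter_true_of_mem fun f _ => ⟨finZeroElim, fun i => i.elim0⟩]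
  rfl

theorem card_indepTuples_succ_le (Y : Finset V) (s : ℕ) :
    #(indepTuples G Y (s + 1)) ≤ ∑ v ∈ Y, #(indepTuples G {w ∈ Y | ¬G.Adj v w} s) := by
  rw [← card_sigma]
  refine (card_le_card ?_).trans
    (card_image_le (f := fun p => (Fin.cons p.1 p.2 : Fin (s + 1) → V)))
  intro f hf
  obtain ⟨hfY, hf⟩ := (mem_filter.1 hf).2
  refine mem_image.2 ⟨⟨f 0, Fin.tail f⟩, mem_sigma.2 ⟨hfY 0, mem_filter.2 ⟨mem_univ _, ?_, ?_⟩⟩,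
    Fin.cons_self_tail f⟩
  · exact fun i => mem_filter.2 ⟨hfY i.succ, hf (Fin.succ_ne_zero i).symm⟩
  · exact fun i j hij => hf (Fin.succ_injective _ |>.ne hij)

theorem card_indepTuples_le [Nonempty V] {d : ℕ} (hreg : G.IsRegularOfDegree d) (hd : 0 < d)
    {lam : ℝ} (hlam : 0 ≤ lam) (hspec : ∀ μ ∈ spectrum ℝ (G.adjMatrix ℝ), μ ≠ d → |μ| ≤ lam)
    (s : ℕ) (Y : Finset V) :
    (#(indepTuples G Y s) : ℝ)
      ≤ (Fintype.card V : ℝ) ^ potential G d Y * (2 * lam * Fintype.card V / d + 1) ^ s := by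
  have hn : (1 : ℝ) ≤ Fintype.card V := by exact_mod_cast Fintype.card_pos
  set n : ℝ := (Fintype.card V : ℝ)
  induction s generalizing Y with
  | zero => simpa [card_indepTuples_zero] using Real.one_le_rpow hn (potential_nonneg Y)
  | succ s ih =>
    set a := 2 * lam * n / d + 1
    set B := n ^ potential G d Y * a ^ s
    have hexc : ∀ v ∈ exceptional G d Y, (#(indepTuples G {w ∈ Y | ¬G.Adj v w} s) : ℝ) ≤ B :=
      fun v _ => (ih _).trans <| mul_le_mul_of_nonneg_right
        (Real.rpow_le_rpow_of_exponent_le hn (potential_mono (filter_subset _ _))) (by positivity)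
    have hgood : ∀ v ∈ Y, v ∉ exceptional G d Y →
        (#(indepTuples G {w ∈ Y | ¬G.Adj v w} s) : ℝ) ≤ B / n := fun v hvY hv =>
      (ih _).trans <| by
        rw [div_eq_mul_inv, mul_right_comm, ← Real.rpow_neg_one, ← Real.rpow_add (by linarith),
          ← sub_eq_add_neg]
        exact mul_le_mul_of_nonneg_right (Real.rpow_le_rpow_of_exponent_le hn
          (potential_filter_not_adj_le hreg hd hvY hv)) (by positivity)
    calc (#(indepTuples G Y (s + 1)) : ℝ)
        ≤ ∑ v ∈ Y, (#(indepTuples G {w ∈ Y | ¬G.Adj v w} s) : ℝ) := by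
          exact_mod_cast card_indepTuples_succ_le Y s
      _ ≤ #(exceptional G d Y) * B + #Y * (B / n) :=
          sum_le_card_mul_add_card_mul (by positivity) (by positivity) hexc hgood
      _ ≤ 2 * lam * n / d * B + n * (B / n) := by
          gcongr
          · exact card_exceptional_le hreg hd hlam hspec Y
          · simp only [n]
            exact_mod_cast card_le_univ Y
      _ = n ^ potential G d Y * a ^ (s + 1) := by
          rw [mul_div_cancel₀ B (by positivity : n ≠ 0), pow_succ]
          simp only [B, a]
          ring

theorem natCard_pairwise_not_adj_eq (t : ℕ) :
    Nat.card {f : Fin t → V // ∀ i j : Fin t, i ≠ j → ¬G.Adj (f i) (f j)}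
      = #(indepTuples G univ t) := by
  rw [Nat.card_eq_fintype_card, Fintype.card_subtype]
  congr 1
  ext f
  simp [indepTuples, Pairwise]

end Counting

end AlonRodl

open AlonRodl

/-- Lemma (Alon–Rödl): in an `(n, d, λ)`-graph, if `t ≥ 2n (log n)² / d`, then the number
of ordered `t`-tuples of vertices, no two of which are adjacent, is at most `(4enλ/d)^t`. -/
theorem alon_rodl_tuple_count {V : Type*} [Fintype V] (G : SimpleGraph V)
    (n d : ℕ) (lam : ℝ) (hG : IsNDLGraph G n d lam) (hd : 0 < d)
    (t : ℕ) (ht : 0 < t) (htlarge : 2 * n * Real.log n ^ 2 / d ≤ (t : ℝ)) :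
    (Nat.card {f : Fin t → V // ∀ i j : Fin t, i ≠ j → ¬ G.Adj (f i) (f j)} : ℝ)
      ≤ (4 * Real.exp 1 * n * lam / d) ^ t := by
  have hreg := hG.isRegularOfDegree
  obtain ⟨rfl, -, hspec⟩ := hG
  cases isEmpty_or_nonempty V with
  | inl _ =>
    have : IsEmpty (Fin t → V) := ⟨fun f => isEmptyElim (f ⟨0, ht⟩)⟩
    simp [ht.ne']
  | inr _ =>
    have hd' : (0 : ℝ) < d := by exact_mod_cast hd
    have hdn := natCast_le_mul_card hreg hd hspec
    set n : ℝ := (Fintype.card V : ℝ)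
    have hlam : 0 ≤ lam := (pos_of_mul_pos_left (hd'.trans_le hdn) (Nat.cast_nonneg _)).le
    have hbase : 2 * lam * n / d + 1 ≤ 4 * lam * n / d := by
      rw [div_add_one hd'.ne', div_le_div_iff_of_pos_right hd']
      linarith
    rw [natCard_pairwise_not_adj_eq]
    calc (#(indepTuples G univ t) : ℝ)
        ≤ n ^ potential G d univ * (2 * lam * n / d + 1) ^ t :=
          card_indepTuples_le hreg hd hlam hspec t univ
      _ ≤ Real.exp t * (4 * lam * n / d) ^ t :=
          mul_le_mul ((rpow_potential_univ_le_exp G d).trans (Real.exp_le_exp.2 htlarge))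
            (pow_le_pow_left₀ (by positivity) hbase t) (by positivity) (by positivity)
      _ = (4 * Real.exp 1 * n * lam / d) ^ t := by
          rw [← Real.exp_one_pow, ← mul_pow]
          ring
end

section
/- Let $N, t, k$ be positive integers and let $H_1, \ldots, H_k$ be graphs, each on the vertex set $\{1,\ldots,N\}$. Suppose that $\binom{N}{t} \cdot \prod_{i=1}^{k} \frac{i_t(H_i)}{\binom{N}{t}} < 1$. Then there exist permutations $\sigma_1, \ldots, \sigma_k$ of $\{1,\ldots,N\}$ such that no set $I \subseteq \{1,\ldots,N\}$ of size $t$ is simultaneously an independent set in every permuted graph $\sigma_i(H_i)$ (where $\sigma_i(H_i)$ is the graph with edges $\{\sigma_i(u), \sigma_i(v)\}$ for each edge $\{u,v\}$ of $H_i$). -/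
open scoped Classical

/-- `i_t(H)`: the number of independent sets of order `t` in `H`. -/
noncomputable def indepCount {V : Type*} [Fintype V] (H : SimpleGraph V) (t : ℕ) : ℕ :=
  Nat.card {I : Finset V // I.card = t ∧ ∀ u ∈ I, ∀ v ∈ I, u ≠ v → ¬ H.Adj u v}

/-! Pick the `σᵢ` independently and uniformly at random. A `t`-set `I` is independent in
`σ(H)` iff `σ⁻¹(I)` is independent in `H`, and each `t`-set `J` equals `σ⁻¹(I)` for at most
`t! (N - t)!` permutations `σ`; so `I` is independent in every `σᵢ(Hᵢ)` for at most
`∏ᵢ i_t(Hᵢ) t! (N - t)!` of the `(N!)^k` tuples. A union bound over the `binom(N,t)` sets `I`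
leaves fewer than `(N!)^k` bad tuples. -/

open Finset Equiv
open scoped Nat

theorem indepCount_eq_card_indepSetFinset {V : Type*} [Fintype V] (H : SimpleGraph V) (t : ℕ) :
    indepCount H t = #(H.indepSetFinset t) := by
  rw [indepCount, Nat.card_eq_fintype_card, Fintype.card_subtype]
  congr 1
  ext I
  simp only [mem_filter, mem_univ, true_and, SimpleGraph.mem_indepSetFinset_iff,
    SimpleGraph.isNIndepSet_iff, and_comm]
  rfl

theorem SimpleGraph.isIndepSet_map_equiv_iff {V W : Type*} (H : SimpleGraph V) (e : V ≃ W)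
    (s : Finset W) :
    (H.map e.toEmbedding).IsIndepSet s ↔ H.IsIndepSet (s.map e.symm.toEmbedding) := by
  rw [← comap_symm, coe_map]
  exact (e.symm.toEmbedding.injective.injOn.pairwise_image (r := fun v w => ¬H.Adj v w)).symm

theorem Finset.map_equiv_eq_iff {α β : Type*} (e : α ≃ β) (s : Finset α) (t : Finset β) :
    s.map e.toEmbedding = t ↔ ∀ x, x ∈ s ↔ e x ∈ t := by
  simp only [Finset.ext_iff, mem_map_equiv]
  exact ⟨fun h x => by simpa using h (e x), fun h y => by simpa using h (e.symm y)⟩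

theorem card_perm_map_eq_le {α : Type*} [Fintype α] (s t : Finset α) (hst : #s = #t) :
    #{σ : Perm α | s.map σ.toEmbedding = t} ≤ (#s)! * (Fintype.card α - #s)! := by
  let split (σ : {σ : Perm α // ∀ x, x ∈ s ↔ σ x ∈ t}) :
      ({x // x ∈ s} ≃ {x // x ∈ t}) × ({x // x ∉ s} ≃ {x // x ∉ t}) :=
    (σ.1.subtypeEquiv σ.2, σ.1.subtypeEquiv fun x => not_congr (σ.2 x))
  have split_injective : Function.Injective split := by
    intro σ τ h
    ext x
    by_cases hx : x ∈ s
    · exact congrArg (fun p => (p.1 ⟨x, hx⟩ : α)) h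
    · exact congrArg (fun p => (p.2 ⟨x, hx⟩ : α)) h
  have e₁ : {x // x ∈ s} ≃ {x // x ∈ t} := Fintype.equivOfCardEq (by simpa using hst)
  have e₂ : {x // x ∉ s} ≃ {x // x ∉ t} :=
    Fintype.equivOfCardEq (by simp [Fintype.card_subtype_compl, hst])
  calc #{σ : Perm α | s.map σ.toEmbedding = t}
      = Fintype.card {σ : Perm α // ∀ x, x ∈ s ↔ σ x ∈ t} := by
        rw [← Fintype.card_subtype]; simp only [Finset.map_equiv_eq_iff]
    _ ≤ _ := Fintype.card_le_of_injective split split_injective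
    _ = (#s)! * (Fintype.card α - #s)! := by
        rw [Fintype.card_prod, Fintype.card_equiv e₁, Fintype.card_equiv e₂,
          Fintype.card_subtype_compl]
        simp

namespace SimpleGraph

variable {V : Type*} [Fintype V]

theorem card_perm_isIndepSet_map_le (H : SimpleGraph V) (I : Finset V) :
    #{σ : Perm V | (H.map σ.toEmbedding).IsIndepSet I} ≤
      indepCount H #I * ((#I)! * (Fintype.card V - #I)!) := by
  rw [indepCount_eq_card_indepSetFinset, mul_comm]
  refine card_le_mul_card_image_of_maps_to (f := fun σ => I.map σ.symm.toEmbedding)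
    (fun σ hσ => ?_) _ (fun J hJ => ?_)
  · exact mem_indepSetFinset_iff.2
      ⟨(isIndepSet_map_equiv_iff H σ I).1 (mem_filter.1 hσ).2, card_map _⟩
  · have hJI : #J = #I := (mem_indepSetFinset_iff.1 hJ).card_eq
    calc #{σ ∈ {σ : Perm V | (H.map σ.toEmbedding).IsIndepSet I} |
          I.map σ.symm.toEmbedding = J}
        ≤ #{σ : Perm V | J.map σ.toEmbedding = I} := by
          refine card_le_card fun σ hσ => mem_filter.2 ⟨mem_univ _, ?_⟩
          rw [← (mem_filter.1 hσ).2, Finset.map_map]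
          simp
      _ ≤ (#I)! * (Fintype.card V - #I)! := hJI ▸ card_perm_map_eq_le J I hJI

theorem card_exists_common_isIndepSet_le {ι : Type*} [Fintype ι] (H : ι → SimpleGraph V)
    (t : ℕ) :
    #{σ : ι → Perm V | ∃ I : Finset V, #I = t ∧
        ∀ i, ((H i).map (σ i).toEmbedding).IsIndepSet I} ≤
      (Fintype.card V).choose t * ∏ i, indepCount (H i) t * (t ! * (Fintype.card V - t)!) := by
  calc #{σ : ι → Perm V | ∃ I : Finset V, #I = t ∧
        ∀ i, ((H i).map (σ i).toEmbedding).IsIndepSet I}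
      ≤ #(((univ : Finset V).powersetCard t).biUnion fun (I : Finset V) =>
          Fintype.piFinset fun i => {τ : Perm V | ((H i).map τ.toEmbedding).IsIndepSet I}) := by
        refine card_le_card fun σ hσ => ?_
        obtain ⟨I, hI, hindep⟩ := (mem_filter.1 hσ).2
        exact mem_biUnion.2 ⟨I, mem_powersetCard.2 ⟨subset_univ I, hI⟩,
          Fintype.mem_piFinset.2 fun i => mem_filter.2 ⟨mem_univ _, hindep i⟩⟩
    _ ≤ ∑ I ∈ (univ : Finset V).powersetCard t, ∏ i,
          #{τ : Perm V | ((H i).map τ.toEmbedding).IsIndepSet I} :=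
        card_biUnion_le.trans_eq (sum_congr rfl fun I _ => Fintype.card_piFinset _)
    _ ≤ ∑ I ∈ (univ : Finset V).powersetCard t,
          ∏ i, indepCount (H i) t * (t ! * (Fintype.card V - t)!) := by
        refine sum_le_sum fun I hI => prod_le_prod' fun i _ => ?_
        obtain rfl := (mem_powersetCard.1 hI).2
        exact card_perm_isIndepSet_map_le (H i) I
    _ = _ := by rw [sum_const, card_powersetCard, Finset.card_univ, smul_eq_mul]

end SimpleGraph

theorem random_permutations_general (N t k : ℕ)
    (H : Fin k → SimpleGraph (Fin N))
    (hcount : (N.choose t : ℝ) *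
      ∏ i : Fin k, ((indepCount (H i) t : ℝ) / (N.choose t : ℝ)) < 1) :
    ∃ σ : Fin k → Equiv.Perm (Fin N),
      ¬ ∃ I : Finset (Fin N), I.card = t ∧
        ∀ i : Fin k, ∀ u ∈ I, ∀ v ∈ I, u ≠ v →
          ¬ ((H i).map (σ i).toEmbedding).Adj u v := by
  by_cases htN : t ≤ N
  swap
  · exact ⟨1, fun ⟨I, hI, _⟩ => htN (hI ▸ by simpa using card_le_univ I)⟩
  have hcount' : N.choose t * ∏ i, indepCount (H i) t < N.choose t ^ k := by
    rw [prod_div_distrib, prod_const, Finset.card_univ, Fintype.card_fin, ← mul_div_assoc,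
      div_lt_one (pow_pos (by exact_mod_cast Nat.choose_pos htN) k)] at hcount
    exact_mod_cast hcount
  have hbound : N.choose t * ∏ i, indepCount (H i) t * (t ! * (N - t)!) < N ! ^ k :=
    calc _ = N.choose t * (∏ i, indepCount (H i) t) * (t ! * (N - t)!) ^ k := by
          rw [prod_mul_distrib, prod_const, Finset.card_univ, Fintype.card_fin, mul_assoc]
      _ < N.choose t ^ k * (t ! * (N - t)!) ^ k :=
          Nat.mul_lt_mul_of_pos_right hcount' (by positivity)
      _ = N ! ^ k := by rw [← mul_pow, ← mul_assoc, Nat.choose_mul_factorial_mul_factorial htN]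
  by_contra! hall
  have hbad := SimpleGraph.card_exists_common_isIndepSet_le H t
  -- restated through `IsIndepSet` so that `simp` recognises the filter predicate
  have hall' : ∀ σ : Fin k → Perm (Fin N), ∃ I : Finset (Fin N), #I = t ∧
      ∀ i, ((H i).map (σ i).toEmbedding).IsIndepSet I := hall
  simp only [hall', Finset.filter_true, Finset.card_univ, Fintype.card_fun, Fintype.card_perm,
    Fintype.card_fin] at hbad
  exact hbad.not_gt hbound

/-- If `binom(N,t) ∏ᵢ (i_t(Hᵢ) / binom(N,t)) < 1`, then there are permutations `σᵢ` of the
vertices such that no `t`-set is simultaneously independent in all the permuted graphs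
`σᵢ(Hᵢ)`. -/
theorem random_permutations (N t k : ℕ) (hN : 0 < N) (ht : 0 < t) (hk : 0 < k)
    (H : Fin k → SimpleGraph (Fin N))
    (hcount : (N.choose t : ℝ) *
      ∏ i : Fin k, ((indepCount (H i) t : ℝ) / (N.choose t : ℝ)) < 1) :
    ∃ σ : Fin k → Equiv.Perm (Fin N),
      ¬ ∃ I : Finset (Fin N), I.card = t ∧
        ∀ i : Fin k, ∀ u ∈ I, ∀ v ∈ I, u ≠ v →
          ¬ ((H i).map (σ i).toEmbedding).Adj u v :=
  random_permutations_general N t k H hcount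
end

section
/- Let $k \ge 1$, let $s_1,\ldots,s_k \ge 3$ and $t \ge 2$ be integers, and let $N, D, M$ be positive integers. Suppose a coloring of the edges of the complete graph $K_N$ with colors $\{1,\ldots,k+1\}$ has no monochromatic clique of size $s_i$ in color $i$ for any $1 \le i \le k$ and no monochromatic clique of size $t$ in color $k+1$. Let $T$ be the graph on the same vertex set whose edges are exactly the edges receiving one of the colors $1,\ldots,k$, and suppose $T$ has maximum degree at most $D$. Suppose $M$ has the following property: for every pair $1 \le i \le j \le k$, every $(k+1)$-coloring of the edges of $K_M$ contains either a monochromatic clique in color $\ell$ for some $\ell \le k$ of size $s_\ell$, where for $i < j$ the target sizes $s_i$ and $s_j$ are each reduced by $1$, and for $i = j$ the target size $s_i$ is replaced by $\max(s_i-2,2)$, or a monochromatic clique of size $t$ in color $k+1$. Then for every vertex $v$, the number of edges of $T$ whose both endpoints are neighbors of $v$ in $T$ is less than $k^2 D M$. -/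
open scoped Classical

/-- The edge coloring `χ` of the complete graph on `Fin N` has a monochromatic clique of
size `m` in color `c`. -/
def HasMonoClique {N : ℕ} {C : Type*} (χ : Sym2 (Fin N) → C) (c : C) (m : ℕ) : Prop :=
  ∃ A : Finset (Fin N), A.card = m ∧ ∀ u ∈ A, ∀ v ∈ A, u ≠ v → χ s(u, v) = c

/-- In a `(k+1)`-coloring of `K_N` with no `K_{s_i}` in color `i` and no `K_t` in color
`k+1`, let `T` be the graph of edges colored with the first `k` colors, and suppose `T` has
maximum degree at most `D`. If every `(k+1)`-coloring of `K_M` contains a monochromatic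
clique in some color `ℓ ≤ k` of size `s_ℓ` reduced by one for each of `ℓ = i` and `ℓ = j`
(clamped below at 2), over every pair `i ≤ j`, or a `K_t` in color `k+1`, then every
neighborhood in `T` spans fewer than `k² D M` edges of `T`. -/
theorem neighborhood_edges_bound (k : ℕ) (hk : 1 ≤ k) (s : Fin k → ℕ) (hs : ∀ i, 3 ≤ s i)
    (t : ℕ) (ht : 2 ≤ t) (N D M : ℕ) (hN : 0 < N) (hD : 0 < D) (hM : 0 < M)
    (χ : Sym2 (Fin N) → Fin (k + 1))
    (hχ1 : ∀ i : Fin k, ¬ HasMonoClique χ i.castSucc (s i))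
    (hχ2 : ¬ HasMonoClique χ (Fin.last k) t)
    (T : SimpleGraph (Fin N))
    (hT : T = SimpleGraph.fromRel fun u v => χ s(u, v) ≠ Fin.last k)
    (hdeg : ∀ v : Fin N, Nat.card (T.neighborSet v) ≤ D)
    (hM' : ∀ i j : Fin k, i ≤ j → ∀ ψ : Sym2 (Fin M) → Fin (k + 1),
      (∃ l : Fin k, HasMonoClique ψ l.castSucc
        (max (s l - ((if l = i then 1 else 0) + (if l = j then 1 else 0))) 2)) ∨
      HasMonoClique ψ (Fin.last k) t) :
    ∀ v : Fin N,
      Nat.card {e : Sym2 (Fin N) | e ∈ T.edgeSet ∧ ∀ x ∈ e, T.Adj v x} < k ^ 2 * D * M := by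
  intro v
  -- adjacency characterization
  have hadj : ∀ a b : Fin N, T.Adj a b ↔ a ≠ b ∧ χ s(a, b) ≠ Fin.last k := by
    subst hT
    intro a b
    rw [SimpleGraph.fromRel_adj]
    constructor
    · rintro ⟨h1, h2 | h2⟩
      · exact ⟨h1, h2⟩
      · refine ⟨h1, ?_⟩; rwa [Sym2.eq_swap]
    · rintro ⟨h1, h2⟩; exact ⟨h1, Or.inl h2⟩
  have hne_last : ∀ c : Fin (k + 1), c ≠ Fin.last k → ∃ i : Fin k, c = i.castSucc := by
    intro c hc
    have hle : (c : ℕ) ≤ k := Nat.lt_succ_iff.mp c.isLt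
    have hlt : (c : ℕ) < k := by
      rcases lt_or_eq_of_le hle with h | h
      · exact h
      · exact absurd (Fin.ext h) hc
    exact ⟨⟨c, hlt⟩, by ext; simp⟩
  have hsymm : ∀ a b : Fin N, χ s(a, b) = χ s(b, a) := by
    intro a b; rw [Sym2.eq_swap]
  -- the buckets
  set W : Fin N → Fin k → Fin k → Finset (Fin N) := fun x i j =>
    Finset.univ.filter (fun y => T.Adj v y ∧ y ≠ x ∧ χ s(x, y) = i.castSucc ∧
      χ s(v, y) = j.castSucc ∧ (i ≠ j ∨ χ s(v, x) = i.castSucc)) with hW_def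
  have hWmem : ∀ x i j y, y ∈ W x i j ↔ (T.Adj v y ∧ y ≠ x ∧ χ s(x, y) = i.castSucc ∧
      χ s(v, y) = j.castSucc ∧ (i ≠ j ∨ χ s(v, x) = i.castSucc)) := by
    intro x i j y
    simp [hW_def, Finset.mem_filter]
  -- key lemma: each bucket has size < M
  have key : ∀ x : Fin N, T.Adj v x → ∀ i j : Fin k, (W x i j).card < M := by
    intro x hvx i j
    by_contra hcon
    push_neg at hcon
    obtain ⟨W', hW'sub, hW'card⟩ := Finset.exists_subset_card_eq hcon
    have e : Fin M ≃ {y // y ∈ W'} := (Finset.equivFinOfCardEq hW'card).symm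
    set g : Fin M → Fin N := fun a => (e a : Fin N) with hg_def
    have hg_inj : Function.Injective g := fun a b hab => e.injective (Subtype.ext hab)
    have hg_mem : ∀ a, g a ∈ W x i j := fun a => hW'sub (e a).2
    have hmem : ∀ a, T.Adj v (g a) ∧ g a ≠ x ∧ χ s(x, g a) = i.castSucc ∧
        χ s(v, g a) = j.castSucc ∧ (i ≠ j ∨ χ s(v, x) = i.castSucc) :=
      fun a => (hWmem x i j (g a)).mp (hg_mem a)
    set ψ : Sym2 (Fin M) → Fin (k + 1) := fun p => χ (p.map g) with hψ_def
    have hψ : ∀ a b, ψ s(a, b) = χ s(g a, g b) := by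
      intro a b; simp [hψ_def, Sym2.map_pair_eq]
    rcases hM' (min i j) (max i j) min_le_max ψ with ⟨ℓ, A, hAcard, hAmono⟩ | ⟨A, hAcard, hAmono⟩
    · -- a clique in one of the first k colors
      have hind : (if ℓ = min i j then 1 else 0) + (if ℓ = max i j then 1 else 0)
          = (if ℓ = i then 1 else 0) + (if ℓ = j then 1 else 0) := by
        rcases le_total i j with h | h
        · rw [min_eq_left h, max_eq_right h]
        · rw [min_eq_right h, max_eq_left h, add_comm]
      rw [hind] at hAcard
      set B : Finset (Fin N) := A.image g with hB_def
      have hBcard : B.card = A.card := Finset.card_image_of_injective A hg_inj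
      have hBmono : ∀ u ∈ B, ∀ w ∈ B, u ≠ w → χ s(u, w) = ℓ.castSucc := by
        intro u hu w hw huw
        obtain ⟨a, ha, rfl⟩ := Finset.mem_image.mp hu
        obtain ⟨b, hb, rfl⟩ := Finset.mem_image.mp hw
        have hab : a ≠ b := fun h => huw (by rw [h])
        rw [← hψ a b]
        exact hAmono a ha b hb hab
      have hBprop : ∀ b ∈ B, T.Adj v b ∧ b ≠ x ∧ χ s(x, b) = i.castSucc ∧
          χ s(v, b) = j.castSucc := by
        intro b hb
        obtain ⟨a, _, rfl⟩ := Finset.mem_image.mp hb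
        exact ⟨(hmem a).1, (hmem a).2.1, (hmem a).2.2.1, (hmem a).2.2.2.1⟩
      have hxB : x ∉ B := fun hx => (hBprop x hx).2.1 rfl
      have hvB : v ∉ B := fun hv => (T.loopless.irrefl v) ((hBprop v hv).1)
      have hvxne : v ≠ x := (hadj v x).mp hvx |>.1
      -- extension helper
      have extend : ∀ (z : Fin N) (C : Finset (Fin N)), z ∉ C →
          (∀ u ∈ C, ∀ w ∈ C, u ≠ w → χ s(u, w) = ℓ.castSucc) →
          (∀ b ∈ C, χ s(z, b) = ℓ.castSucc) →
          (∀ u ∈ insert z C, ∀ w ∈ insert z C, u ≠ w → χ s(u, w) = ℓ.castSucc) := by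
        intro z C hz hmono hzb u hu w hw huw
        rcases Finset.mem_insert.mp hu with huz | hu <;>
          rcases Finset.mem_insert.mp hw with hwz | hw
        · exact absurd (huz.trans hwz.symm) huw
        · rw [huz]; exact hzb w hw
        · rw [hwz, hsymm]; exact hzb u hu
        · exact hmono u hu w hw huw
      have finish : ∀ C : Finset (Fin N), s ℓ ≤ C.card →
          (∀ u ∈ C, ∀ w ∈ C, u ≠ w → χ s(u, w) = ℓ.castSucc) → False := by
        intro C hC hmono
        obtain ⟨C', hsub, hcard⟩ := Finset.exists_subset_card_eq hC
        exact hχ1 ℓ ⟨C', hcard, fun u hu w hw huw => hmono u (hsub hu) w (hsub hw) huw⟩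
      by_cases hi : ℓ = i <;> by_cases hj : ℓ = j
      · -- ℓ = i = j : add both x and v
        rw [if_pos hi, if_pos hj] at hAcard
        have hij : i = j := hi ▸ hj
        have hvx_col : χ s(v, x) = i.castSucc := by
          rcases (hmem ⟨0, hM⟩).2.2.2.2 with h | h
          · exact absurd hij h
          · exact h
        have hxmono : ∀ b ∈ B, χ s(x, b) = ℓ.castSucc := fun b hb => hi ▸ (hBprop b hb).2.2.1
        have hC1 := extend x B hxB hBmono hxmono
        have hxC1 : x ∈ insert x B := Finset.mem_insert_self x B
        have hvC1 : v ∉ insert x B := by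
          intro hv
          rcases Finset.mem_insert.mp hv with h | h
          · exact hvxne h
          · exact hvB h
        have hvmono : ∀ b ∈ insert x B, χ s(v, b) = ℓ.castSucc := by
          intro b hb
          rcases Finset.mem_insert.mp hb with rfl | hb
          · rw [hvx_col, hi]
          · rw [(hBprop b hb).2.2.2, hj]
        have hC2 := extend v (insert x B) hvC1 hC1 hvmono
        refine finish _ ?_ hC2
        rw [Finset.card_insert_of_notMem hvC1, Finset.card_insert_of_notMem hxB, hBcard,
          hAcard]
        have h3 := hs ℓ
        have := le_max_left (s ℓ - (1 + 1)) 2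
        omega
      · -- ℓ = i ≠ j : add x
        rw [if_pos hi, if_neg hj] at hAcard
        have hxmono : ∀ b ∈ B, χ s(x, b) = ℓ.castSucc := fun b hb => hi ▸ (hBprop b hb).2.2.1
        refine finish _ ?_ (extend x B hxB hBmono hxmono)
        rw [Finset.card_insert_of_notMem hxB, hBcard, hAcard]
        have h3 := hs ℓ
        have := le_max_left (s ℓ - (1 + 0)) 2
        omega
      · -- ℓ = j ≠ i : add v
        rw [if_neg hi, if_pos hj] at hAcard
        have hvmono : ∀ b ∈ B, χ s(v, b) = ℓ.castSucc := fun b hb => hj ▸ (hBprop b hb).2.2.2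
        refine finish _ ?_ (extend v B hvB hBmono hvmono)
        rw [Finset.card_insert_of_notMem hvB, hBcard, hAcard]
        have h3 := hs ℓ
        have := le_max_left (s ℓ - (0 + 1)) 2
        omega
      · -- ℓ ∉ {i, j}
        rw [if_neg hi, if_neg hj] at hAcard
        refine finish B ?_ hBmono
        rw [hBcard, hAcard]
        have h3 := hs ℓ
        have := le_max_left (s ℓ - (0 + 0)) 2
        omega
    · -- a clique in the last color
      refine hχ2 ⟨A.image g, ?_, ?_⟩
      · rw [Finset.card_image_of_injective A hg_inj, hAcard]
      · intro u hu w hw huw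
        obtain ⟨a, ha, rfl⟩ := Finset.mem_image.mp hu
        obtain ⟨b, hb, rfl⟩ := Finset.mem_image.mp hw
        have hab : a ≠ b := fun h => huw (by rw [h])
        rw [← hψ a b]
        exact hAmono a ha b hb hab
  -- counting
  set Ev : Finset (Sym2 (Fin N)) :=
    Finset.univ.filter (fun e => e ∈ T.edgeSet ∧ ∀ x ∈ e, T.Adj v x) with hEv_def
  have hcardeq : Nat.card {e : Sym2 (Fin N) | e ∈ T.edgeSet ∧ ∀ x ∈ e, T.Adj v x}
      = Ev.card := by
    have hset : {e : Sym2 (Fin N) | e ∈ T.edgeSet ∧ ∀ x ∈ e, T.Adj v x}.toFinset = Ev := by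
      ext e
      simp [hEv_def, Set.mem_toFinset]
    rw [Nat.card_eq_fintype_card, ← Set.toFinset_card, hset]
  -- choice of a good endpoint for each edge
  have hchoice : ∀ e ∈ Ev, ∃ p : Fin N × Fin N,
      s(p.1, p.2) = e ∧ T.Adj v p.1 ∧ ∃ i j, p.2 ∈ W p.1 i j := by
    intro e
    induction e using Sym2.inductionOn with
    | hf x y =>
      intro he
      rw [hEv_def, Finset.mem_filter] at he
      obtain ⟨-, he1, he2⟩ := he
      have hxy : T.Adj x y := (SimpleGraph.mem_edgeSet T).mp he1
      have hvx : T.Adj v x := he2 x (by simp)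
      have hvy : T.Adj v y := he2 y (by simp)
      obtain ⟨ei, hei⟩ := hne_last _ ((hadj x y).mp hxy).2
      obtain ⟨ea, hea⟩ := hne_last _ ((hadj v x).mp hvx).2
      obtain ⟨eb, heb⟩ := hne_last _ ((hadj v y).mp hvy).2
      have hxyne : x ≠ y := ((hadj x y).mp hxy).1
      by_cases hcase : ei = eb ∧ ea ≠ ei
      · refine ⟨(y, x), Sym2.eq_swap, hvy, ei, ea, ?_⟩
        rw [hWmem]
        exact ⟨hvx, hxyne, by rw [hsymm]; exact hei, hea, Or.inl hcase.2.symm⟩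
      · refine ⟨(x, y), rfl, hvx, ei, eb, ?_⟩
        rw [hWmem]
        refine ⟨hvy, hxyne.symm, hei, heb, ?_⟩
        by_cases h : ei = eb
        · right
          have : ea = ei := by
            by_contra hne
            exact hcase ⟨h, hne⟩
          rw [hea, this]
        · exact Or.inl h
  set F : Sym2 (Fin N) → Fin N × Fin N := fun e =>
    if h : e ∈ Ev then (hchoice e h).choose else (⟨0, hN⟩, ⟨0, hN⟩) with hF_def
  have hFspec : ∀ e ∈ Ev, s((F e).1, (F e).2) = e ∧ T.Adj v (F e).1 ∧
      ∃ i j, (F e).2 ∈ W (F e).1 i j := by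
    intro e he
    rw [hF_def]
    simp only [dif_pos he]
    exact (hchoice e he).choose_spec
  set S : Finset (Fin N × Fin N) := (T.neighborFinset v).biUnion (fun x =>
    ((Finset.univ : Finset (Fin k)) ×ˢ (Finset.univ : Finset (Fin k))).biUnion
      (fun ij => (W x ij.1 ij.2).image (fun y => (x, y)))) with hS_def
  have hmaps : ∀ e ∈ Ev, F e ∈ S := by
    intro e he
    obtain ⟨-, hadj', i, j, hmem'⟩ := hFspec e he
    rw [hS_def, Finset.mem_biUnion]
    refine ⟨(F e).1, (SimpleGraph.mem_neighborFinset T v _).mpr hadj', ?_⟩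
    rw [Finset.mem_biUnion]
    exact ⟨(i, j), Finset.mem_product.mpr ⟨Finset.mem_univ i, Finset.mem_univ j⟩,
      Finset.mem_image.mpr ⟨(F e).2, hmem', rfl⟩⟩
  have hinj : Set.InjOn F ↑Ev := by
    intro e1 h1 e2 h2 hfe
    have s1 := (hFspec e1 h1).1
    have s2 := (hFspec e2 h2).1
    rw [← s1, ← s2, hfe]
  have hEvS : Ev.card ≤ S.card := Finset.card_le_card_of_injOn F hmaps hinj
  have hnb : (T.neighborFinset v).card ≤ D := by
    rw [SimpleGraph.neighborFinset, Set.toFinset_card, ← Nat.card_eq_fintype_card]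
    exact hdeg v
  have hScard : S.card ≤ D * (k * k * (M - 1)) := by
    rw [hS_def]
    calc ((T.neighborFinset v).biUnion _).card
        ≤ ∑ x ∈ T.neighborFinset v, (((Finset.univ : Finset (Fin k)) ×ˢ
            (Finset.univ : Finset (Fin k))).biUnion
            (fun ij => (W x ij.1 ij.2).image (fun y => (x, y)))).card :=
          Finset.card_biUnion_le
      _ ≤ ∑ _x ∈ T.neighborFinset v, (k * k * (M - 1)) := by
          refine Finset.sum_le_sum ?_
          intro x hx
          have hvx : T.Adj v x := (SimpleGraph.mem_neighborFinset T v x).mp hx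
          calc (((Finset.univ : Finset (Fin k)) ×ˢ (Finset.univ : Finset (Fin k))).biUnion
                (fun ij => (W x ij.1 ij.2).image (fun y => (x, y)))).card
              ≤ ∑ ij ∈ (Finset.univ : Finset (Fin k)) ×ˢ (Finset.univ : Finset (Fin k)),
                  ((W x ij.1 ij.2).image (fun y => (x, y))).card := Finset.card_biUnion_le
            _ ≤ ∑ _ij ∈ (Finset.univ : Finset (Fin k)) ×ˢ (Finset.univ : Finset (Fin k)),
                  (M - 1) := by
                refine Finset.sum_le_sum ?_
                intro ij _
                have := key x hvx ij.1 ij.2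
                have himg := Finset.card_image_le (s := W x ij.1 ij.2)
                  (f := fun y => (x, y))
                omega
            _ = k * k * (M - 1) := by
                rw [Finset.sum_const, smul_eq_mul, Finset.card_product]
                simp [Finset.card_univ]
      _ = (T.neighborFinset v).card * (k * k * (M - 1)) := by
          rw [Finset.sum_const, smul_eq_mul]
      _ ≤ D * (k * k * (M - 1)) := Nat.mul_le_mul_right _ hnb
  rw [hcardeq]
  have hfinal : D * (k * k * (M - 1)) < k ^ 2 * D * M := by
    have h1 : 1 ≤ k * k * D := Nat.one_le_iff_ne_zero.mpr (by positivity)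
    have : k ^ 2 = k * k := sq k
    nlinarith [Nat.sub_lt hM Nat.one_pos, hM, hk, hD]
  omega
end
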